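/- Let Φ : K̂ → ℝ³ be the composite pyramid mapping: on T̂₁, Φ(x̂) = λ₁ v₃ + λ₂ v₁ + λ₃ v₂ + λ₄ v₅ − λ₁λ₂ v_P, where (λ₁,λ₂,λ₃,λ₄) = (x̂₂−x̂₃/2, 1−x̂₁−x̂₃/2, x̂₁−x̂₂, x̂₃) and v_P = v₁−v₂+v₃−v₄; similarly on T̂₂ with barycentric coordinates (1−x̂₂−x̂₃/2, x̂₁−x̂₃/2, x̂₂−x̂₁, x̂₃) and vertex weights v₁,v₃,v₄,v₅. Then Φ is continuous on K̂ (the two formulas agree on the interface plane {x̂₁=x̂₂}), Φ maps the five vertices of the reference pyramid (0,0,0),(1,0,0),(1,1,0),(0,1,0),(1/2,1/2,1) to v₁,v₂,v₃,v₄,v₅ respectively, and the restriction of Φ to the base {x̂₃=0} equals the bilinear Bézier surface (s,t) ↦ (1−s)(1−t)v₁ + s(1−t)v₂ + st v₃ + (1−s)t v₄ with (s,t)=(x̂₁,x̂₂). -/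
import Mathlib


/-- Distortion vector `v_P = v₁ − v₂ + v₃ − v₄`. -/
noncomputable def vP (v : Fin 5 → Fin 3 → ℝ) : Fin 3 → ℝ :=
  v 0 - v 1 + v 2 - v 3

/-- The composite pyramid map on `T̂₁` (where `x̂₁ ≥ x̂₂`). -/
noncomputable def PhiT1 (v : Fin 5 → Fin 3 → ℝ) (x : Fin 3 → ℝ) : Fin 3 → ℝ :=
  (x 1 - x 2 / 2) • v 2 + (1 - x 0 - x 2 / 2) • v 0 + (x 0 - x 1) • v 1 +
    x 2 • v 4 - ((x 1 - x 2 / 2) * (1 - x 0 - x 2 / 2)) • vP v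

/-- The composite pyramid map on `T̂₂` (where `x̂₂ ≥ x̂₁`). -/
noncomputable def PhiT2 (v : Fin 5 → Fin 3 → ℝ) (x : Fin 3 → ℝ) : Fin 3 → ℝ :=
  (1 - x 1 - x 2 / 2) • v 0 + (x 0 - x 2 / 2) • v 2 + (x 1 - x 0) • v 3 +
    x 2 • v 4 - ((1 - x 1 - x 2 / 2) * (x 0 - x 2 / 2)) • vP v

/-- The bilinear Bézier base surface. -/
noncomputable def bezBase (v : Fin 5 → Fin 3 → ℝ) (s t : ℝ) : Fin 3 → ℝ :=
  ((1 - s) * (1 - t)) • v 0 + (s * (1 - t)) • v 1 + (s * t) • v 2 +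
    ((1 - s) * t) • v 3

theorem stmt17 (v : Fin 5 → Fin 3 → ℝ) :
    -- the two pieces agree on the interface plane {x̂₁ = x̂₂}
    (∀ x : Fin 3 → ℝ, x 0 = x 1 → PhiT1 v x = PhiT2 v x) ∧
    -- the reference vertices are mapped to the physical vertices
    PhiT1 v ![0, 0, 0] = v 0 ∧ PhiT1 v ![1, 0, 0] = v 1 ∧
    PhiT1 v ![1, 1, 0] = v 2 ∧ PhiT2 v ![0, 1, 0] = v 3 ∧
    PhiT1 v ![1/2, 1/2, 1] = v 4 ∧
    -- the restriction to the base {x̂₃ = 0} is the bilinear Bézier patch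
    (∀ s t : ℝ, t ≤ s → PhiT1 v ![s, t, 0] = bezBase v s t) ∧
    (∀ s t : ℝ, s ≤ t → PhiT2 v ![s, t, 0] = bezBase v s t) := by
  refine ⟨?_, ?_, ?_, ?_, ?_, ?_, ?_, ?_⟩ <;>
    first
    | (intro x h; funext i
       simp only [PhiT1, PhiT2, vP, Pi.add_apply, Pi.sub_apply, Pi.smul_apply,
         smul_eq_mul]
       rw [h]; ring)
    | (try intro s t h
       funext i
       simp only [PhiT1, PhiT2, bezBase, vP, Pi.add_apply, Pi.sub_apply,
         Pi.smul_apply, smul_eq_mul, Matrix.cons_val_zero, Matrix.cons_val_one,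
         Matrix.head_cons, Matrix.cons_val_two, Matrix.tail_cons]
       ring)
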